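/- Let p > 1/2 and c₀, c₁, c₂ ∈ ℝ with c₂ ≠ 0. Then there is a constant C depending only on p such that ∫_ℝ ⟨c₂ x² + c₁ x + c₀⟩^{-p} dx ≤ C |c₂|^{-1/2}. -/

import Mathlib

/-!
Completing the square and rescaling by `√|c₂|` turns the integral into
`|c₂|^(-1/2) ∫ ⟨t² + e⟩^(-p) dt` (for `c₂ < 0` first replace the quadratic by its negative,
as `⟨-y⟩ = ⟨y⟩`). This is bounded uniformly in `e` by `2 ∫ ⟨t²⟩^(-p)`, which is finite since
`⟨t²⟩ ≥ (1 + t²)/√2` and `2p > 1`: for `e ≥ 0` we have `⟨t² + e⟩ ≥ ⟨t²⟩`, and for `e = -r²` the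
factorisation `t² - r² = (t - r)(t + r)` gives `|t² - r²| ≥ min ((t - r)², (t + r)²)`.
-/

open MeasureTheory Real

noncomputable def japaneseBracket (y : ℝ) : ℝ := √(1 + y ^ 2)

namespace japaneseBracket

lemma pos (y : ℝ) : 0 < japaneseBracket y := sqrt_pos.mpr (by positivity)

@[simp]
lemma neg (y : ℝ) : japaneseBracket (-y) = japaneseBracket y := by
  simp [japaneseBracket]

lemma le_of_abs_le {a b : ℝ} (h : |a| ≤ |b|) : japaneseBracket a ≤ japaneseBracket b :=
  sqrt_le_sqrt (by nlinarith [sq_le_sq.mpr h])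

lemma rpow_neg_le_of_abs_le {p a b : ℝ} (hp : 0 ≤ p) (h : |a| ≤ |b|) :
    japaneseBracket b ^ (-p) ≤ japaneseBracket a ^ (-p) :=
  rpow_le_rpow_of_nonpos (pos a) (le_of_abs_le h) (by linarith)

lemma one_add_sq_div_sqrt_two_le (t : ℝ) : (1 + t ^ 2) / √2 ≤ japaneseBracket (t ^ 2) := by
  rw [div_le_iff₀ (by positivity), japaneseBracket, ← sqrt_mul (by positivity)]
  refine le_sqrt_of_sq_le ?_
  nlinarith [sq_nonneg (t ^ 2 - 1)]

end japaneseBracket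

open japaneseBracket

lemma integrable_rpow_neg_japaneseBracket_sq {p : ℝ} (hp : 1 / 2 < p) :
    Integrable fun t : ℝ ↦ japaneseBracket (t ^ 2) ^ (-p) := by
  have hmaj : Integrable fun t : ℝ ↦ √2 ^ p * (1 + ‖t‖ ^ 2) ^ (-(2 * p) / 2) :=
    (integrable_rpow_neg_one_add_norm_sq (by simp; linarith)).const_mul _
  have hmeas : Measurable fun t : ℝ ↦ japaneseBracket (t ^ 2) ^ (-p) := by
    unfold japaneseBracket; fun_prop
  refine hmaj.mono' hmeas.aestronglyMeasurable (.of_forall fun t ↦ ?_)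
  rw [norm_of_nonneg (rpow_nonneg (pos _).le _), norm_eq_abs, sq_abs,
    neg_div, mul_div_cancel_left₀ _ two_ne_zero]
  calc japaneseBracket (t ^ 2) ^ (-p)
      ≤ ((1 + t ^ 2) / √2) ^ (-p) :=
        rpow_le_rpow_of_nonpos (by positivity) (one_add_sq_div_sqrt_two_le t) (by linarith)
    _ = √2 ^ p * (1 + t ^ 2) ^ (-p) := by
        rw [div_rpow (by positivity) (by positivity), rpow_neg (sqrt_nonneg 2), div_inv_eq_mul,
          mul_comm]

lemma rpow_neg_japaneseBracket_sq_sub_sq_le {p r : ℝ} (hp : 0 ≤ p) (hr : 0 ≤ r) (t : ℝ) :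
    japaneseBracket (t ^ 2 - r ^ 2) ^ (-p) ≤
      japaneseBracket ((t - r) ^ 2) ^ (-p) + japaneseBracket ((t + r) ^ 2) ^ (-p) := by
  wlog ht : 0 ≤ t generalizing t
  · have := this (-t) (by linarith)
    rw [neg_sq, show (-t - r) ^ 2 = (t + r) ^ 2 by ring, show (-t + r) ^ 2 = (t - r) ^ 2 by ring]
      at this
    linarith
  have hle : |(t - r) ^ 2| ≤ |t ^ 2 - r ^ 2| := by
    rw [abs_pow, sq, show t ^ 2 - r ^ 2 = (t - r) * (t + r) by ring, abs_mul]
    refine mul_le_mul_of_nonneg_left (abs_le_abs ?_ ?_) (abs_nonneg _) <;> linarith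
  linarith [rpow_neg_le_of_abs_le hp hle, rpow_nonneg (pos ((t + r) ^ 2)).le (-p)]

/-- For `e ≥ 0` the square root `√(-e)` is the junk value `0`. -/
lemma rpow_neg_japaneseBracket_sq_add_le {p : ℝ} (hp : 0 ≤ p) (e t : ℝ) :
    japaneseBracket (t ^ 2 + e) ^ (-p) ≤
      japaneseBracket ((t - √(-e)) ^ 2) ^ (-p) + japaneseBracket ((t + √(-e)) ^ 2) ^ (-p) := by
  rcases lt_or_ge e 0 with he | he
  · have hsq : t ^ 2 + e = t ^ 2 - √(-e) ^ 2 := by rw [sq_sqrt (by linarith)]; ring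
    rw [hsq]
    exact rpow_neg_japaneseBracket_sq_sub_sq_le hp (sqrt_nonneg _) t
  · have hle : |t ^ 2| ≤ |t ^ 2 + e| := abs_le_abs_of_nonneg (by positivity) (by linarith)
    rw [sqrt_eq_zero_of_nonpos (by linarith), sub_zero, add_zero]
    linarith [rpow_neg_le_of_abs_le hp hle, rpow_nonneg (pos (t ^ 2)).le (-p)]

lemma integral_rpow_neg_japaneseBracket_sq_add_le {p : ℝ} (hp : 1 / 2 < p) (e : ℝ) :
    ∫ t, japaneseBracket (t ^ 2 + e) ^ (-p) ≤ 2 * ∫ t, japaneseBracket (t ^ 2) ^ (-p) := by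
  set h : ℝ → ℝ := fun t ↦ japaneseBracket (t ^ 2) ^ (-p)
  have hint := integrable_rpow_neg_japaneseBracket_sq hp
  have hsub : Integrable fun t ↦ h (t - √(-e)) := hint.comp_sub_right _
  have hadd : Integrable fun t ↦ h (t + √(-e)) := hint.comp_add_right _
  calc ∫ t, japaneseBracket (t ^ 2 + e) ^ (-p)
      ≤ ∫ t, (h (t - √(-e)) + h (t + √(-e))) :=
        integral_mono_of_nonneg (.of_forall fun t ↦ rpow_nonneg (pos _).le _) (hsub.add hadd)
          (.of_forall (rpow_neg_japaneseBracket_sq_add_le (by linarith) e))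
    _ = 2 * ∫ t, h t := by
        rw [integral_add hsub hadd, integral_sub_right_eq_self, integral_add_right_eq_self]
        ring

theorem integral_comp_quadratic {E : Type*} [NormedAddCommGroup E] [NormedSpace ℝ E]
    (f : ℝ → E) {a : ℝ} (ha : 0 < a) (b c : ℝ) :
    ∫ x, f (a * x ^ 2 + b * x + c) =
      a ^ (-(1 / 2 : ℝ)) • ∫ t, f (t ^ 2 + (c - b ^ 2 / (4 * a))) := by
  set g : ℝ → E := fun t ↦ f (t ^ 2 + (c - b ^ 2 / (4 * a)))
  have hsq (x : ℝ) :
      a * x ^ 2 + b * x + c = (√a * (x + b / (2 * a))) ^ 2 + (c - b ^ 2 / (4 * a)) := by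
    rw [mul_pow, sq_sqrt ha.le]
    field_simp
    ring
  calc ∫ x, f (a * x ^ 2 + b * x + c) = ∫ x, (fun y ↦ g (√a * y)) (x + b / (2 * a)) := by
        simp only [hsq, g]
    _ = ∫ y, g (√a * y) := integral_add_right_eq_self (fun y ↦ g (√a * y)) _
    _ = a ^ (-(1 / 2 : ℝ)) • ∫ t, g t := by
        rw [Measure.integral_comp_mul_left, abs_of_pos (by positivity), sqrt_eq_rpow,
          ← rpow_neg ha.le]

lemma integral_rpow_neg_japaneseBracket_quadratic_le {p a : ℝ} (hp : 1 / 2 < p) (ha : 0 < a)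
    (b c : ℝ) :
    ∫ x, japaneseBracket (a * x ^ 2 + b * x + c) ^ (-p) ≤
      (2 * ∫ t, japaneseBracket (t ^ 2) ^ (-p)) * a ^ (-(1 / 2 : ℝ)) := by
  rw [integral_comp_quadratic (fun y ↦ japaneseBracket y ^ (-p)) ha, smul_eq_mul, mul_comm]
  exact mul_le_mul_of_nonneg_right (integral_rpow_neg_japaneseBracket_sq_add_le hp _)
    (rpow_nonneg ha.le _)

theorem stmt_4 (p : ℝ) (hp : 1 / 2 < p) :
    ∃ C : ℝ, 0 < C ∧ ∀ c₀ c₁ c₂ : ℝ, c₂ ≠ 0 →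
      (∫ x : ℝ, (Real.sqrt (1 + (c₂ * x ^ 2 + c₁ * x + c₀) ^ 2)) ^ (-p))
        ≤ C * |c₂| ^ (-(1 / 2 : ℝ)) := by
  set I := ∫ t, japaneseBracket (t ^ 2) ^ (-p)
  have hI : 0 ≤ I := integral_nonneg fun t ↦ rpow_nonneg (pos _).le _
  have hbound : ∀ {a : ℝ} (b c : ℝ), 0 < a →
      ∫ x, japaneseBracket (a * x ^ 2 + b * x + c) ^ (-p) ≤ (2 * I + 1) * a ^ (-(1 / 2 : ℝ)) :=
    fun b c ha ↦ (integral_rpow_neg_japaneseBracket_quadratic_le hp ha b c).trans <|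
      mul_le_mul_of_nonneg_right (by linarith) (rpow_nonneg ha.le _)
  refine ⟨2 * I + 1, by linarith, fun c₀ c₁ c₂ hc₂ ↦ ?_⟩
  change ∫ x, japaneseBracket (c₂ * x ^ 2 + c₁ * x + c₀) ^ (-p) ≤ _
  rcases hc₂.lt_or_gt with hneg | hpos
  · have hflip : ∀ x, japaneseBracket (c₂ * x ^ 2 + c₁ * x + c₀) =
        japaneseBracket (-c₂ * x ^ 2 + -c₁ * x + -c₀) := fun x ↦ by
      rw [← japaneseBracket.neg]; ring_nf
    simp only [hflip, abs_of_neg hneg]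
    exact hbound _ _ (neg_pos.mpr hneg)
  · rw [abs_of_pos hpos]
    exact hbound _ _ hpos
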